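/- For continuous maps f, g : W → X and h : X → Y, D(h ∘ f, h ∘ g) ≤ D(f, g); moreover if h is a homotopy equivalence then D(h ∘ f, h ∘ g) = D(f, g). -/

import Mathlib

/-- Homotopic distance: least `n` such that `X` has an open cover by `n+1` open sets on each
of which `f` and `g` restrict to homotopic maps; `⊤` if no such cover exists. -/
noncomputable def hDist {X Y : Type*} [TopologicalSpace X] [TopologicalSpace Y]
    (f g : C(X, Y)) : ℕ∞ :=
  sInf {N : ℕ∞ | ∃ n : ℕ, N = n ∧ ∃ U : Fin (n + 1) → Set X,
    (∀ i, IsOpen (U i)) ∧ (∀ x, ∃ i, x ∈ U i) ∧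
    ∀ i, (f.restrict (U i)).Homotopic (g.restrict (U i))}

/-! Every open cover witnessing `hDist f g` also witnesses `hDist (h ∘ f) (h ∘ g)`, because
composing with `h` preserves homotopies. Conversely, a left homotopy inverse `k` of `h` carries
homotopies back, as `k ∘ h ∘ p` is homotopic to `p` on every subspace. -/

open ContinuousMap

section

variable {W X Y : Type*} [TopologicalSpace W] [TopologicalSpace X] [TopologicalSpace Y]

lemma hDist_le_of_restrict_homotopic {f g : C(W, X)} {f' g' : C(W, Y)}
    (H : ∀ U : Set W, (f.restrict U).Homotopic (g.restrict U) →
      (f'.restrict U).Homotopic (g'.restrict U)) :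
    hDist f' g' ≤ hDist f g := by
  apply sInf_le_sInf
  rintro N ⟨n, rfl, U, hopen, hcover, hhom⟩
  exact ⟨n, rfl, U, hopen, hcover, fun i => H (U i) (hhom i)⟩

lemma hDist_comp_le (f g : C(W, X)) (h : C(X, Y)) :
    hDist (h.comp f) (h.comp g) ≤ hDist f g :=
  hDist_le_of_restrict_homotopic fun _ hU => (Homotopic.refl h).comp hU

lemma hDist_le_hDist_comp {f g : C(W, X)} {h : C(X, Y)} {k : C(Y, X)}
    (hkh : (k.comp h).Homotopic (ContinuousMap.id X)) :
    hDist f g ≤ hDist (h.comp f) (h.comp g) := by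
  refine hDist_le_of_restrict_homotopic fun U hU => ?_
  have cancel : ∀ p : C(W, X), ((k.comp h).comp (p.restrict U)).Homotopic (p.restrict U) :=
    fun p => hkh.comp (Homotopic.refl (p.restrict U))
  exact ((cancel f).symm.trans ((Homotopic.refl k).comp hU)).trans (cancel g)

end

theorem hDist_comp_left {W X Y : Type*} [TopologicalSpace W] [TopologicalSpace X]
    [TopologicalSpace Y] (f g : C(W, X)) (h : C(X, Y)) :
    hDist (h.comp f) (h.comp g) ≤ hDist f g ∧
      ((∃ k : C(Y, X), (h.comp k).Homotopic (ContinuousMap.id Y) ∧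
          (k.comp h).Homotopic (ContinuousMap.id X)) →
        hDist (h.comp f) (h.comp g) = hDist f g) :=
  ⟨hDist_comp_le f g h, fun ⟨_, _, hkh⟩ =>
    (hDist_comp_le f g h).antisymm (hDist_le_hDist_comp hkh)⟩
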